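/- Let D ⊆ {0,1}^{k+1} with |D| ≥ 2^{k/2}, and let N_D = |D|. For b ∈ {0,1}^k let D_{[b]} = {(x, x·b) : x ∈ {0,1}^k} and N_b = |D ∩ D_{[b]}|. Then E_{b ∼ U_k}[ (N_b/N_D − 1/2)² ] ≤ 1/N_D ≤ 2^{−k/2}, and consequently with probability at least 1 − 2^{−k/8} over uniform b ∈ {0,1}^k, |N_b/N_D − 1/2| < 2^{−k/8}. -/
import Mathlib
open Finset
open scoped Classical

def ip {k : ℕ} (x b : Fin k → Bool) : Bool :=
  decide ((Finset.univ.filter (fun i => x i && b i)).card % 2 = 1)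

noncomputable def ch (b : Bool) : ℝ := if b then -1 else 1

lemma ch_sq (b : Bool) : ch b * ch b = 1 := by cases b <;> simp [ch]

lemma ch_pow (n : ℕ) : ch (decide (n % 2 = 1)) = (-1 : ℝ) ^ n := by
  rcases Nat.even_or_odd n with h | h
  · simp [ch, Nat.even_iff.mp h, h.neg_one_pow]
  · simp [ch, Nat.odd_iff.mp h, h.neg_one_pow]

lemma ch_ip {k : ℕ} (x b : Fin k → Bool) :
    ch (ip x b) = ∏ i : Fin k, ch (x i && b i) := by
  rw [ip, ch_pow, Finset.card_filter, ← Finset.prod_pow_eq_pow_sum]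
  refine Finset.prod_congr rfl fun i _ => ?_
  cases h : x i && b i <;> simp [ch, h]

lemma sum_bool_coord (u v : Bool) :
    ∑ w : Bool, ch (u && w) * ch (v && w) = if u = v then 2 else 0 := by
  cases u <;> cases v <;> simp [ch]; norm_num

lemma orth {k : ℕ} (x y : Fin k → Bool) :
    ∑ b : Fin k → Bool, ch (ip x b) * ch (ip y b)
      = if x = y then (2:ℝ)^k else 0 := by
  have h1 : ∀ b : Fin k → Bool, ch (ip x b) * ch (ip y b)
      = ∏ i : Fin k, (ch (x i && b i) * ch (y i && b i)) := by
    intro b; rw [ch_ip, ch_ip, ← Finset.prod_mul_distrib]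
  calc ∑ b : Fin k → Bool, ch (ip x b) * ch (ip y b)
      = ∑ b ∈ Fintype.piFinset (fun _ : Fin k => (Finset.univ : Finset Bool)),
          ∏ i : Fin k, (ch (x i && b i) * ch (y i && b i)) := by
        rw [Fintype.piFinset_univ]; exact Finset.sum_congr rfl fun b _ => h1 b
    _ = ∏ i : Fin k, ∑ w : Bool, ch (x i && w) * ch (y i && w) := by
        rw [Finset.prod_univ_sum]
    _ = ∏ i : Fin k, (if x i = y i then (2:ℝ) else 0) :=
        Finset.prod_congr rfl fun i _ => sum_bool_coord (x i) (y i)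
    _ = if x = y then (2:ℝ)^k else 0 := by
        by_cases h : x = y
        · subst h; simp
        · rw [if_neg h]
          obtain ⟨i, hi⟩ := Function.ne_iff.mp h
          exact Finset.prod_eq_zero (Finset.mem_univ i) (if_neg hi)

lemma ind_eq (c e : Bool) : (if c = e then (1:ℝ) else 0) = (1 + ch c * ch e)/2 := by
  cases c <;> cases e <;> simp [ch] <;> norm_num

theorem stmt7 (k : ℕ) (D : Finset ((Fin k → Bool) × Bool))
    (hD : (2:ℝ) ^ ((k:ℝ)/2) ≤ D.card) :
    ((1 / (2:ℝ) ^ k) * ∑ b : Fin k → Bool,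
        (((D.filter (fun z => z.2 = ip z.1 b)).card : ℝ) / D.card - 1/2) ^ 2
      ≤ 1 / (D.card : ℝ)) ∧
    (1 / (D.card : ℝ) ≤ (2:ℝ) ^ (-(k:ℝ)/2)) ∧
    ((1 - (2:ℝ) ^ (-(k:ℝ)/8)) * 2 ^ k ≤
      ((Finset.univ.filter (fun b : Fin k → Bool =>
        |((D.filter (fun z => z.2 = ip z.1 b)).card : ℝ) / D.card - 1/2|
          < (2:ℝ) ^ (-(k:ℝ)/8))).card : ℝ)) := by
  set N : ℝ := (D.card : ℝ) with hNdef
  have hNpos : 0 < N := lt_of_lt_of_le (Real.rpow_pos_of_pos two_pos _) hD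
  have hNne : N ≠ 0 := ne_of_gt hNpos
  set T : (Fin k → Bool) → ℝ := fun b => ∑ z ∈ D, ch z.2 * ch (ip z.1 b) with hT
  -- N_b = (N + T b)/2
  have hNb : ∀ b : Fin k → Bool,
      ((D.filter (fun z => z.2 = ip z.1 b)).card : ℝ) = (N + T b)/2 := by
    intro b
    rw [← Finset.sum_boole]
    have : ∀ z ∈ D, (if z.2 = ip z.1 b then (1:ℝ) else 0)
        = (1 + ch z.2 * ch (ip z.1 b))/2 := fun z _ => ind_eq _ _
    rw [Finset.sum_congr rfl this]
    rw [hT]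
    rw [← Finset.sum_div, Finset.sum_add_distrib, Finset.sum_const, nsmul_eq_mul, mul_one]
  -- deviation
  have hdev : ∀ b : Fin k → Bool,
      ((D.filter (fun z => z.2 = ip z.1 b)).card : ℝ) / N - 1/2 = T b / (2*N) := by
    intro b; rw [hNb b]; field_simp; ring
  -- sum of squares of T
  have hTsum : ∑ b : Fin k → Bool, (T b)^2 ≤ (2:ℝ)^k * N := by
    have expand : ∀ b : Fin k → Bool, (T b)^2
        = ∑ z ∈ D, ∑ w ∈ D,
            (ch z.2 * ch w.2) * (ch (ip z.1 b) * ch (ip w.1 b)) := by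
      intro b
      rw [sq, hT, Finset.sum_mul_sum]
      exact Finset.sum_congr rfl fun z _ => Finset.sum_congr rfl fun w _ => by ring
    calc ∑ b : Fin k → Bool, (T b)^2
        = ∑ z ∈ D, ∑ w ∈ D, (ch z.2 * ch w.2) *
            (∑ b : Fin k → Bool, ch (ip z.1 b) * ch (ip w.1 b)) := by
          rw [Finset.sum_congr rfl fun b _ => expand b, Finset.sum_comm]
          refine Finset.sum_congr rfl fun z _ => ?_
          rw [Finset.sum_comm]
          exact Finset.sum_congr rfl fun w _ => (Finset.mul_sum _ _ _).symm
      _ = ∑ z ∈ D, ∑ w ∈ D,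
            (if z.1 = w.1 then (ch z.2 * ch w.2) * (2:ℝ)^k else 0) := by
          refine Finset.sum_congr rfl fun z _ => Finset.sum_congr rfl fun w _ => ?_
          rw [orth, mul_ite, mul_zero]
      _ ≤ ∑ _z ∈ D, (2:ℝ)^k := by
          refine Finset.sum_le_sum fun z hz => ?_
          rw [← Finset.add_sum_erase _ _ hz, if_pos rfl, ch_sq, one_mul]
          have : ∑ w ∈ D.erase z,
              (if z.1 = w.1 then (ch z.2 * ch w.2) * (2:ℝ)^k else 0) ≤ 0 := by
            refine Finset.sum_nonpos fun w hw => ?_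
            by_cases h : z.1 = w.1
            · rw [if_pos h]
              have hne : z ≠ w := (Finset.ne_of_mem_erase hw).symm
              have h2 : z.2 ≠ w.2 := by
                intro h2; exact hne (Prod.ext h h2)
              have : ch z.2 * ch w.2 = -1 := by
                cases hz2 : z.2 <;> cases hw2 : w.2 <;>
                  simp_all [ch]
              rw [this, neg_one_mul]
              exact neg_nonpos.mpr (le_of_lt (by positivity))
            · rw [if_neg h]
          linarith
      _ = (2:ℝ)^k * N := by rw [Finset.sum_const, nsmul_eq_mul, mul_comm]
  have hP : (0:ℝ) < (2:ℝ)^k := by positivity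
  -- full sum bound
  have hfull : ∑ b : Fin k → Bool,
      (((D.filter (fun z => z.2 = ip z.1 b)).card : ℝ) / N - 1/2) ^ 2
      ≤ (2:ℝ)^k / (4*N) := by
    have : ∀ b : Fin k → Bool,
        (((D.filter (fun z => z.2 = ip z.1 b)).card : ℝ) / N - 1/2) ^ 2
        = (T b)^2 / (4*N^2) := by
      intro b; rw [hdev b, div_pow]; congr 1; ring
    rw [Finset.sum_congr rfl fun b _ => this b, ← Finset.sum_div]
    rw [div_le_div_iff₀ (by positivity) (by positivity)]
    calc (∑ b : Fin k → Bool, (T b)^2) * (4*N)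
        ≤ ((2:ℝ)^k * N) * (4*N) := by
          apply mul_le_mul_of_nonneg_right hTsum (by positivity)
      _ = (2:ℝ)^k * (4*N^2) := by ring
  -- part 2
  have hpart2 : 1 / N ≤ (2:ℝ) ^ (-(k:ℝ)/2) := by
    have : (2:ℝ) ^ (-(k:ℝ)/2) = 1 / (2:ℝ) ^ ((k:ℝ)/2) := by
      rw [neg_div, Real.rpow_neg (by norm_num), one_div]
    rw [this]
    exact one_div_le_one_div_of_le (Real.rpow_pos_of_pos two_pos _) hD
  refine ⟨?_, hpart2, ?_⟩
  · -- part 1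
    calc (1 / (2:ℝ) ^ k) * ∑ b : Fin k → Bool,
          (((D.filter (fun z => z.2 = ip z.1 b)).card : ℝ) / N - 1/2) ^ 2
        ≤ (1 / (2:ℝ)^k) * ((2:ℝ)^k / (4*N)) :=
          mul_le_mul_of_nonneg_left hfull (by positivity)
      _ = 1 / (4*N) := by field_simp
      _ ≤ 1 / N := by
          apply one_div_le_one_div_of_le hNpos; linarith
  · -- part 3 (Markov)
    set ε : ℝ := (2:ℝ) ^ (-(k:ℝ)/8) with hε
    have hεpos : 0 < ε := Real.rpow_pos_of_pos two_pos _
    set p : (Fin k → Bool) → Prop := fun b =>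
      |((D.filter (fun z => z.2 = ip z.1 b)).card : ℝ) / N - 1/2| < ε with hp
    have hcards : ((Finset.univ.filter p).card : ℝ)
        + ((Finset.univ.filter (fun b => ¬ p b)).card : ℝ) = (2:ℝ)^k := by
      rw [← Nat.cast_add, Finset.card_filter_add_card_filter_not]
      simp [Finset.card_univ]
    set B := Finset.univ.filter (fun b => ¬ p b) with hB
    have hBbound : (B.card : ℝ) * ε^2 ≤ (2:ℝ)^k / (4*N) := by
      calc (B.card : ℝ) * ε^2 = ∑ _b ∈ B, ε^2 := by
            rw [Finset.sum_const, nsmul_eq_mul]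
        _ ≤ ∑ b ∈ B,
            (((D.filter (fun z => z.2 = ip z.1 b)).card : ℝ) / N - 1/2) ^ 2 := by
            refine Finset.sum_le_sum fun b hb => ?_
            have := Finset.mem_filter.mp hb
            have habs : ε ≤ |((D.filter (fun z => z.2 = ip z.1 b)).card : ℝ) / N - 1/2| :=
              not_lt.mp this.2
            calc ε^2 ≤ |((D.filter (fun z => z.2 = ip z.1 b)).card : ℝ) / N - 1/2|^2 :=
                  pow_le_pow_left₀ (le_of_lt hεpos) habs 2
              _ = _ := sq_abs _
        _ ≤ ∑ b : Fin k → Bool,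
            (((D.filter (fun z => z.2 = ip z.1 b)).card : ℝ) / N - 1/2) ^ 2 :=
            Finset.sum_le_sum_of_subset_of_nonneg (Finset.subset_univ _)
              (fun b _ _ => sq_nonneg _)
        _ ≤ (2:ℝ)^k / (4*N) := hfull
    -- 1/(4N) ≤ ε^3
    have hcube : (1:ℝ)/(4*N) ≤ ε^3 := by
      have h1 : (1:ℝ)/N ≤ (2:ℝ) ^ (-(k:ℝ)/2) := hpart2
      have h2 : (2:ℝ) ^ (-(k:ℝ)/2) ≤ (2:ℝ) ^ (-(3*(k:ℝ))/8) := by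
        apply Real.rpow_le_rpow_of_exponent_le (by norm_num)
        have : (0:ℝ) ≤ (k:ℝ) := Nat.cast_nonneg k
        linarith
      have h3 : ε^3 = (2:ℝ) ^ (-(3*(k:ℝ))/8) := by
        rw [hε, ← Real.rpow_natCast ((2:ℝ) ^ (-(k:ℝ)/8)) 3, ← Real.rpow_mul (by norm_num)]
        congr 1
        push_cast
        ring
      have h4 : (1:ℝ)/(4*N) ≤ 1/N := by
        apply one_div_le_one_div_of_le hNpos; linarith
      rw [h3]; linarith
    have hBcard : (B.card : ℝ) ≤ ε * (2:ℝ)^k := by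
      have : (B.card : ℝ) * ε^2 ≤ (ε * (2:ℝ)^k) * ε^2 := by
        calc (B.card : ℝ) * ε^2 ≤ (2:ℝ)^k / (4*N) := hBbound
          _ = (2:ℝ)^k * (1/(4*N)) := by ring
          _ ≤ (2:ℝ)^k * ε^3 := by
              apply mul_le_mul_of_nonneg_left hcube (le_of_lt hP)
          _ = (ε * (2:ℝ)^k) * ε^2 := by ring
      exact le_of_mul_le_mul_right this (by positivity)
    have : ((Finset.univ.filter p).card : ℝ) = (2:ℝ)^k - (B.card : ℝ) := by
      rw [← hcards]; ring
    rw [this]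
    have hexp : (1 - ε) * (2:ℝ)^k = (2:ℝ)^k - ε * (2:ℝ)^k := by ring
    linarith
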